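/- Let Ω′₃ = y(xz − x² − y²) dx + x(x² + y²) dy − x²y dz and ψ₃(x,y,z) = (x², xy, xz + y²/2). Then ψ₃*Ω′₃ ∧ (y(z − x) dx + x² dy − xy dz) = 0 as a polynomial 2-form. -/

import Mathlib

/-!
The pullback ψ₃*Ω′₃ is the multiple x⁵ · (y(z − x) dx + x² dy − xy dz) of the second form,
and the wedge product of a form with a multiple of itself vanishes.
-/

theorem wedge_minors_eq_zero_of_eq_mul {R : Type*} [CommRing R] {a b c u v w : R} (t : R)
    (ha : a = t * u) (hb : b = t * v) (hc : c = t * w) :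
    a * v - b * u = 0 ∧ a * w - c * u = 0 ∧ b * w - c * v = 0 := by
  subst ha hb hc
  exact ⟨by ring, by ring, by ring⟩

/-- With Ω′₃ = y(xz − x² − y²) dx + x(x² + y²) dy − x²y dz and
ψ₃(x,y,z) = (x², xy, xz + y²/2), one has
ψ₃*Ω′₃ ∧ (y(z − x) dx + x² dy − xy dz) = 0. -/
theorem pullback_Omega3_wedge (x y z : ℂ) :
    -- ψ₃ = (f,g,h); df = 2x dx, dg = y dx + x dy, dh = z dx + y dy + x dz
    let f := x ^ 2
    let g := x * y
    let h := x * z + y ^ 2 / 2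
    let A := g * (f * h - f ^ 2 - g ^ 2)
    let B := f * (f ^ 2 + g ^ 2)
    let C := -(f ^ 2 * g)
    let ηx := A * (2 * x) + B * y + C * z
    let ηy := B * x + C * y
    let ηz := C * x
    let ωx := y * (z - x)
    let ωy := x ^ 2
    let ωz := -(x * y)
    ηx * ωy - ηy * ωx = 0 ∧ ηx * ωz - ηz * ωx = 0 ∧ ηy * ωz - ηz * ωy = 0 := by
  intro f g h A B C ηx ηy ηz ωx ωy ωz
  exact wedge_minors_eq_zero_of_eq_mul (x ^ 5) (by ring) (by ring) (by ring)
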